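/- Let m=(m_1,…,m_n) be a tuple of nonnegative integers, S_i=m_1+⋯+m_i, and N=S_1+⋯+S_n. The number of placements of type m in which no wrapping occurs during the bully path projection equals f_λ, the number of standard Young tableaux of shape λ=(S_n, S_{n−1}, …, S_1). Moreover, a placement M has no wrapping if and only if M_{i,S_i−k} < M_{i+1,S_{i+1}−k} for all 1 ≤ i ≤ n−1 and 0 ≤ k ≤ S_i−1, and an explicit bijection with SYT of shape λ is given by Y_{i,j} = N − M_{n−i+1, S_{n−i+1}−j+1} + 1. -/

import Mathlib

namespace CMLQ

/-- Partial sums `S m i = m 1 + ⋯ + m i` (1-indexed). -/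
def S (m : ℕ → ℕ) (i : ℕ) : ℕ := ∑ j ∈ Finset.Icc 1 i, m j

/-- Total number of entries `N = S 1 + ⋯ + S n`. -/
def Ntot (n : ℕ) (m : ℕ → ℕ) : ℕ := ∑ i ∈ Finset.Icc 1 n, S m i

/-- `rows` (1-indexed rows, each given as a finite set of entries, the increasing
order being implicit) is a placement of type `m` with `n` rows:  row `i` has
`S m i` entries, the rows are disjoint, and together the entries are exactly
`1, …, N`. -/
def IsPlacement (n : ℕ) (m : ℕ → ℕ) (rows : ℕ → Finset ℕ) : Prop :=
  (∀ i ∈ Finset.Icc 1 n, (rows i).card = S m i) ∧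
  (∀ i, i ∉ Finset.Icc 1 n → rows i = ∅) ∧
  (∀ i j, i ≠ j → Disjoint (rows i) (rows j)) ∧
  (Finset.Icc 1 n).biUnion rows = Finset.Icc 1 (Ntot n m)

/-- Next entry of a bully path: the smallest available entry of the next row
larger than `x`, or (wrapping) the smallest available entry of the next row. -/
def nextEntry (A : Finset ℕ) (x : ℕ) : ℕ :=
  ((A.filter fun y => x < y).min.untopD (A.min.untopD 0))

/-- Run one bully path starting below `x`, through the list of available sets of
the lower rows; returns the path (one entry per lower row) and the updated
available sets. -/
def runPath (x : ℕ) : List (Finset ℕ) → List ℕ × List (Finset ℕ)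
  | [] => ([], [])
  | A :: rest =>
    let y := nextEntry A x
    let (p, rest') := runPath y rest
    (y :: p, A.erase y :: rest')

/-- Run the bully paths starting at each entry of `starts` in order. -/
def runRow : List ℕ → List (Finset ℕ) → List (List ℕ) × List (Finset ℕ)
  | [], avail => ([], avail)
  | x :: xs, avail =>
    let (p, avail') := runPath x avail
    let (ps, avail'') := runRow xs avail'
    ((x :: p) :: ps, avail'')

/-- Run the whole bully path procedure, row by row; returns the list of all
bully paths (a path starting in row `r` is recorded as its list of entries,
one in each of rows `r, r+1, …, n`; entries of the last row not on any path
are recorded as paths of length 1). -/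
def runRows : ℕ → List (Finset ℕ) → List (List ℕ)
  | 0, _ => []
  | _ + 1, [] => []
  | fuel + 1, A :: rest =>
    let (ps, rest') := runRow (A.sort (· ≤ ·)) rest
    ps ++ runRows fuel rest'

/-- The list of all bully paths of a placement with `n` rows. -/
def pathsOf (n : ℕ) (rows : ℕ → Finset ℕ) : List (List ℕ) :=
  runRows n ((List.range n).map fun i => rows (i + 1))

/-- All steps `(x, y)` of bully paths (`y` is the entry of the next row reached
from `x`). -/
def edgesOf (n : ℕ) (rows : ℕ → Finset ℕ) : List (ℕ × ℕ) :=
  ((pathsOf n rows).map fun p => p.zip p.tail).flatten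

/-- `x` bullies `y`: a bully path steps from `x` to the entry `y > x` of the
next row (a non-wrapping step). -/
def Bullies (n : ℕ) (rows : ℕ → Finset ℕ) (x y : ℕ) : Prop :=
  (x, y) ∈ edgesOf n rows ∧ x < y

/-- A bully path steps from `x` to `y` by wrapping. -/
def WrapBullies (n : ℕ) (rows : ℕ → Finset ℕ) (x y : ℕ) : Prop :=
  (x, y) ∈ edgesOf n rows ∧ y < x

/-- The number of wrapping events from row `i` to row `i+1`. -/
def wrapCount (n : ℕ) (rows : ℕ → Finset ℕ) (i : ℕ) : ℕ :=
  (edgesOf n rows).countP fun e => decide (e.2 < e.1 ∧ e.1 ∈ rows i)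

/-- The `k`-th smallest entry of row `i` (both 1-indexed). -/
def entry (rows : ℕ → Finset ℕ) (i k : ℕ) : ℕ :=
  ((rows i).sort (· ≤ ·)).getD (k - 1) 0

/-- The projected word: `wordOf n rows a` is the label of the `a`-th smallest
entry of the last row (1-indexed); a path of length `n - r + 1` starts in
row `r` and labels its last entry `r`. -/
def wordOf (n : ℕ) (rows : ℕ → Finset ℕ) (a : ℕ) : ℕ :=
  ((pathsOf n rows).findSome? fun p =>
    if p.getLast? = some (entry rows n a) then some (n + 1 - p.length) else none).getD 0

/-- A standard Young tableau of shape `lam` (rows of the shape listed from top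
to bottom), encoded as a function on 0-indexed cells `(i, j)`, vanishing
outside the shape: entries are `1, …, |lam|`, pairwise distinct, strictly
increasing along rows and down columns. -/
def IsSYT (lam : List ℕ) (T : ℕ × ℕ → ℕ) : Prop :=
  (∀ c : ℕ × ℕ, ¬(c.1 < lam.length ∧ c.2 < lam.getD c.1 0) → T c = 0) ∧
  (∀ c : ℕ × ℕ, c.1 < lam.length → c.2 < lam.getD c.1 0 → 1 ≤ T c ∧ T c ≤ lam.sum) ∧
  (∀ c c' : ℕ × ℕ, c.1 < lam.length → c.2 < lam.getD c.1 0 →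
    c'.1 < lam.length → c'.2 < lam.getD c'.1 0 → c ≠ c' → T c ≠ T c') ∧
  (∀ i j j' : ℕ, i < lam.length → j < j' → j' < lam.getD i 0 → T (i, j) < T (i, j')) ∧
  (∀ i i' j : ℕ, i < i' → i' < lam.length → j < lam.getD i 0 → j < lam.getD i' 0 →
    T (i, j) < T (i', j))

/-- `f_lam`: the number of standard Young tableaux of shape `lam`. -/
noncomputable def sytCount (lam : List ℕ) : ℕ := Set.ncard {T : ℕ × ℕ → ℕ | IsSYT lam T}

/-- Binomial coefficient with an integer lower index (`0` if negative). -/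
def chooseInt (a : ℕ) (b : ℤ) : ℕ := if 0 ≤ b then a.choose b.toNat else 0

/-- The type `(m₁, m₂, m₃) = (s, t, u)` of a three-row placement. -/
def m3 (s t u : ℕ) : ℕ → ℕ := fun i => if i = 1 then s else if i = 2 then t else if i = 3 then u else 0

/-- The type `(m₁, m₂) = (s, u)` of a two-row placement. -/
def m2 (s u : ℕ) : ℕ → ℕ := fun i => if i = 1 then s else if i = 2 then u else 0

/-- No wrapping occurs anywhere during the bully path projection. -/
def NoWrap (n : ℕ) (rows : ℕ → Finset ℕ) : Prop :=
  ∀ i ∈ Finset.Icc 1 (n - 1), wrapCount n rows i = 0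

/-- The shape `λ = (S_n, S_{n-1}, …, S_1)`. -/
def shapeOf (n : ℕ) (m : ℕ → ℕ) : List ℕ := (List.range n).map fun i => S m (n - i)

/-- The map `M ↦ Y`, `Y_{i,j} = N − M_{n−i+1, S_{n−i+1}−j+1} + 1`
(recorded on 0-indexed cells `(i-1, j-1)`). -/
def yMap (n : ℕ) (m : ℕ → ℕ) (rows : ℕ → Finset ℕ) : ℕ × ℕ → ℕ :=
  fun c => if c.1 < n ∧ c.2 < S m (n - c.1)
    then Ntot n m - entry rows (n - c.1) (S m (n - c.1) - c.2) + 1 else 0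


/-! ### Auxiliary development -/

open Finset List

/-- Number of elements of `A` that are `≥ t`. -/
def cge (A : Finset ℕ) (t : ℕ) : ℕ := (A.filter (fun u => t ≤ u)).card

/-- Number of elements of `A` that are `> t`. -/
def cgt (A : Finset ℕ) (t : ℕ) : ℕ := (A.filter (fun u => t < u)).card

lemma entry_eq_ent (rows : ℕ → Finset ℕ) (i k : ℕ) :
    entry rows i k = ((rows i).sort (· ≤ ·)).getD (k - 1) 0 := rfl

/-- abbreviation for the k-th smallest element (1-indexed). -/
def ent (A : Finset ℕ) (k : ℕ) : ℕ := (A.sort (· ≤ ·)).getD (k - 1) 0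

lemma card_filter_sort (A : Finset ℕ) (p : ℕ → Prop) [DecidablePred p] :
    (A.filter p).card = ((A.sort (· ≤ ·)).filter (fun u => decide (p u))).length := by
  classical
  calc (A.filter p).card = Multiset.card (Multiset.filter p A.val) := rfl
  _ = Multiset.card (Multiset.filter p ((A.sort (· ≤ ·) : List ℕ) : Multiset ℕ)) := by
      rw [Finset.sort_eq]
  _ = ((A.sort (· ≤ ·)).filter (fun u => decide (p u))).length := by
      rw [Multiset.filter_coe]; simp

lemma sorted_filter_ge_length : ∀ (L : List ℕ), L.Pairwise (· < ·) → ∀ j, (hj : j < L.length) →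
    (L.filter (fun u => decide (L[j] ≤ u))).length = L.length - j := by
  intro L
  induction L with
  | nil => intro _ j hj; simp at hj
  | cons a L ih =>
    intro hs j hj
    have hall : ∀ b ∈ L, a < b := fun b hb => (List.pairwise_cons.1 hs).1 b hb
    cases j with
    | zero =>
      simp only [List.getElem_cons_zero]
      have : (a :: L).filter (fun u => decide (a ≤ u)) = a :: L := by
        apply List.filter_eq_self.2
        intro b hb
        have : a ≤ b := by
          rcases List.mem_cons.1 hb with h | h
          · omega
          · exact le_of_lt (hall b h)
        simpa using this
      rw [this]; simp
    | succ j =>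
      have hj' : j < L.length := by simpa using hj
      have hgl : (a :: L)[j+1] = L[j] := by simp
      rw [hgl]
      have haL : L[j] ∈ L := List.getElem_mem hj'
      have ha : ¬ (L[j] ≤ a) := by have := hall _ haL; omega
      have : (a :: L).filter (fun u => decide (L[j] ≤ u))
          = L.filter (fun u => decide (L[j] ≤ u)) := by
        rw [List.filter_cons]
        simp [ha]
      rw [this, ih (List.pairwise_cons.1 hs).2 j hj']
      simp only [List.length_cons]
      omega

lemma sorted_filter_gt_length : ∀ (L : List ℕ), L.Pairwise (· < ·) → ∀ j, (hj : j < L.length) →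
    (L.filter (fun u => decide (L[j] < u))).length = L.length - j - 1 := by
  intro L
  induction L with
  | nil => intro _ j hj; simp at hj
  | cons a L ih =>
    intro hs j hj
    have hall : ∀ b ∈ L, a < b := fun b hb => (List.pairwise_cons.1 hs).1 b hb
    cases j with
    | zero =>
      simp only [List.getElem_cons_zero]
      have : (a :: L).filter (fun u => decide (a < u)) = L := by
        rw [List.filter_cons]
        have h0 : decide (a < a) = false := by simp
        rw [h0]
        simp only [if_neg Bool.false_ne_true]
        apply List.filter_eq_self.2
        intro b hb; simpa using (hall b hb)
      rw [this]; simp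
    | succ j =>
      have hj' : j < L.length := by simpa using hj
      have hgl : (a :: L)[j+1] = L[j] := by simp
      rw [hgl]
      have haL : L[j] ∈ L := List.getElem_mem hj'
      have ha : ¬ (L[j] < a) := by have := hall _ haL; omega
      have : (a :: L).filter (fun u => decide (L[j] < u))
          = L.filter (fun u => decide (L[j] < u)) := by
        rw [List.filter_cons]
        simp [ha]
      rw [this, ih (List.pairwise_cons.1 hs).2 j hj']
      simp

lemma ent_eq_getElem (A : Finset ℕ) (k : ℕ) (h1 : 1 ≤ k) (h2 : k ≤ A.card) :
    ent A k = (A.sort (· ≤ ·))[k-1]'(by rw [Finset.length_sort]; omega) := by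
  unfold ent
  rw [List.getD_eq_getElem]

lemma ent_mem (A : Finset ℕ) (k : ℕ) (h1 : 1 ≤ k) (h2 : k ≤ A.card) : ent A k ∈ A := by
  rw [ent_eq_getElem A k h1 h2]
  rw [← Finset.mem_sort (α := ℕ) (· ≤ ·)]
  exact List.getElem_mem _

lemma ent_lt_ent (A : Finset ℕ) {k l : ℕ} (h1 : 1 ≤ k) (h' : k < l) (h2 : l ≤ A.card) :
    ent A k < ent A l := by
  rw [ent_eq_getElem A k h1 (le_of_lt (lt_of_lt_of_le h' h2)),
      ent_eq_getElem A l (by omega) h2]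
  have hs := (Finset.sortedLT_sort A).pairwise
  rw [List.pairwise_iff_getElem] at hs
  exact hs _ _ _ _ (by omega)

lemma cge_ent (A : Finset ℕ) (k : ℕ) (hk : k < A.card) :
    cge A (ent A (A.card - k)) = k + 1 := by
  have h1 : 1 ≤ A.card - k := by omega
  rw [cge, card_filter_sort, ent_eq_getElem A _ h1 (by omega)]
  rw [sorted_filter_ge_length _ ((Finset.sortedLT_sort A).pairwise) _ (by rw [Finset.length_sort]; omega)]
  rw [Finset.length_sort]; omega

lemma cgt_ent (A : Finset ℕ) (k : ℕ) (hk : k < A.card) :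
    cgt A (ent A (A.card - k)) = k := by
  have h1 : 1 ≤ A.card - k := by omega
  rw [cgt, card_filter_sort, ent_eq_getElem A _ h1 (by omega)]
  rw [sorted_filter_gt_length _ ((Finset.sortedLT_sort A).pairwise) _ (by rw [Finset.length_sort]; omega)]
  rw [Finset.length_sort]; omega

lemma cge_mono (A : Finset ℕ) {t t' : ℕ} (h : t' ≤ t) : cge A t ≤ cge A t' := by
  apply Finset.card_le_card
  intro u hu
  rw [Finset.mem_filter] at hu ⊢
  exact ⟨hu.1, le_trans h hu.2⟩

lemma cgt_mono (A : Finset ℕ) {t t' : ℕ} (h : t' ≤ t) : cgt A t ≤ cgt A t' := by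
  apply Finset.card_le_card
  intro u hu
  rw [Finset.mem_filter] at hu ⊢
  exact ⟨hu.1, lt_of_le_of_lt h hu.2⟩

lemma cge_le_cgt (A : Finset ℕ) {t t' : ℕ} (h : t' < t) : cge A t ≤ cgt A t' := by
  apply Finset.card_le_card
  intro u hu
  rw [Finset.mem_filter] at hu ⊢
  exact ⟨hu.1, lt_of_lt_of_le h hu.2⟩

lemma cgt_le_cge (A : Finset ℕ) (t : ℕ) : cgt A t ≤ cge A t := by
  apply Finset.card_le_card
  intro u hu
  rw [Finset.mem_filter] at hu ⊢
  exact ⟨hu.1, le_of_lt hu.2⟩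

lemma cge_le_card (A : Finset ℕ) (t : ℕ) : cge A t ≤ A.card :=
  Finset.card_le_card (Finset.filter_subset _ _)

lemma lt_ent_of_cgt (A : Finset ℕ) {k t : ℕ} (hk : k < A.card) (h : k + 1 ≤ cgt A t) :
    t < ent A (A.card - k) := by
  by_contra hc
  push_neg at hc
  have := cgt_mono A hc
  rw [cgt_ent A k hk] at this
  omega

lemma le_ent_of_cge (A : Finset ℕ) {k t : ℕ} (hk : k < A.card) (h : k + 1 ≤ cge A t) :
    t ≤ ent A (A.card - k) := by
  by_contra hc
  push_neg at hc
  have := cge_le_cgt A hc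
  rw [cgt_ent A k hk] at this
  omega

/-- Hall-type condition between two rows. -/
def pairHall (A B : Finset ℕ) : Prop := ∀ t, cge A t ≤ cgt B t

lemma pairHall_iff (A B : Finset ℕ) (h : A.card ≤ B.card) :
    pairHall A B ↔ ∀ k < A.card, ent A (A.card - k) < ent B (B.card - k) := by
  constructor
  · intro hH k hk
    apply lt_ent_of_cgt B (by omega)
    calc k + 1 = cge A (ent A (A.card - k)) := (cge_ent A k hk).symm
    _ ≤ cgt B _ := hH _
  · intro hI t
    by_cases h0 : cge A t = 0
    · omega
    · set k := cge A t - 1 with hkdef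
      have hk : k < A.card := by
        have := cge_le_card A t; omega
      have ht : t ≤ ent A (A.card - k) := le_ent_of_cge A hk (by omega)
      have hlt : ent A (A.card - k) < ent B (B.card - k) := hI k hk
      have h2 : cge B (ent B (B.card - k)) = k + 1 := cge_ent B k (by omega)
      have h3 : cge B (ent B (B.card - k)) ≤ cgt B t := cge_le_cgt B (by omega)
      omega

lemma ineq_of_inj (A B : Finset ℕ) (f : ℕ → ℕ) (hinj : Set.InjOn f A)
    (hmap : ∀ a ∈ A, f a ∈ B) (hlt : ∀ a ∈ A, a < f a) (hcard : A.card ≤ B.card)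
    {k : ℕ} (hk : k < A.card) :
    ent A (A.card - k) < ent B (B.card - k) := by
  classical
  set t := ent A (A.card - k) with htdef
  apply lt_ent_of_cgt B (by omega)
  have h1 : ((A.filter (fun u => t ≤ u)).image f) ⊆ B.filter (fun u => t < u) := by
    intro y hy
    rcases Finset.mem_image.1 hy with ⟨a, ha, rfl⟩
    rcases Finset.mem_filter.1 ha with ⟨haA, hat⟩
    refine Finset.mem_filter.2 ⟨hmap a haA, ?_⟩
    have := hlt a haA; omega
  have h2 : ((A.filter (fun u => t ≤ u)).image f).card = k + 1 := by
    rw [Finset.card_image_of_injOn (hinj.mono (by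
      intro a ha; exact (Finset.mem_filter.1 (by exact_mod_cast ha)).1))]
    exact cge_ent A k hk
  have := Finset.card_le_card h1
  rw [h2] at this
  exact this


/-! ### Dynamics: Hall invariant gives no wrapping -/

lemma runPath_nil (x : ℕ) : runPath x [] = ([], []) := rfl

lemma runPath_cons (x : ℕ) (A : Finset ℕ) (rest : List (Finset ℕ)) :
    runPath x (A :: rest) =
      ((nextEntry A x) :: (runPath (nextEntry A x) rest).1,
       A.erase (nextEntry A x) :: (runPath (nextEntry A x) rest).2) := by
  simp [runPath]

lemma runRow_nil (As : List (Finset ℕ)) : runRow [] As = ([], As) := rfl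

lemma runRow_cons (x : ℕ) (xs : List ℕ) (As : List (Finset ℕ)) :
    runRow (x :: xs) As =
      ((x :: (runPath x As).1) :: (runRow xs (runPath x As).2).1,
        (runRow xs (runPath x As).2).2) := by
  simp [runRow]

lemma runRows_succ (fuel : ℕ) (A : Finset ℕ) (rest : List (Finset ℕ)) :
    runRows (fuel + 1) (A :: rest) =
      (runRow (A.sort (· ≤ ·)) rest).1 ++ runRows fuel (runRow (A.sort (· ≤ ·)) rest).2 := by
  simp [runRows]

lemma nextEntry_spec {A : Finset ℕ} {x : ℕ} (h : (A.filter (fun y => x < y)).Nonempty) :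
    nextEntry A x ∈ A ∧ x < nextEntry A x ∧ ∀ z ∈ A, x < z → nextEntry A x ≤ z := by
  have hmin : (A.filter (fun y => x < y)).min = ((A.filter (fun y => x < y)).min' h : ℕ) :=
    (Finset.coe_min' h).symm
  have hne : nextEntry A x = (A.filter (fun y => x < y)).min' h := by
    rw [nextEntry, hmin]; rfl
  have hmem := Finset.min'_mem _ h
  rw [Finset.mem_filter] at hmem
  refine ⟨by rw [hne]; exact hmem.1, by rw [hne]; exact hmem.2, ?_⟩
  intro z hz hxz
  rw [hne]
  exact Finset.min'_le _ _ (Finset.mem_filter.2 ⟨hz, hxz⟩)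

lemma hall_step {x : ℕ} {R A : Finset ℕ} (hx : x ∉ R) (hH : pairHall (insert x R) A) :
    nextEntry A x ∈ A ∧ x < nextEntry A x ∧
    (∀ z ∈ A, x < z → nextEntry A x ≤ z) ∧
    pairHall R (A.erase (nextEntry A x)) := by
  classical
  have h1 : 1 ≤ cge (insert x R) x := by
    apply Finset.card_pos.2
    exact ⟨x, Finset.mem_filter.2 ⟨Finset.mem_insert_self x R, le_refl x⟩⟩
  have h2 : 1 ≤ cgt A x := le_trans h1 (hH x)
  have hne : (A.filter (fun y => x < y)).Nonempty := Finset.card_pos.1 h2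
  obtain ⟨hmem, hlt, hmin⟩ := nextEntry_spec hne
  refine ⟨hmem, hlt, hmin, ?_⟩
  set y := nextEntry A x with hy
  intro t
  have hins : cge (insert x R) t = cge R t + (if t ≤ x then 1 else 0) := by
    unfold cge
    rw [Finset.filter_insert]
    by_cases htx : t ≤ x
    · rw [if_pos htx, if_pos htx,
        Finset.card_insert_of_notMem (fun hc => hx (Finset.mem_of_mem_filter x hc))]
    · rw [if_neg htx, if_neg htx]
      omega
  have hers : cgt (A.erase y) t = cgt A t - (if t < y then 1 else 0) := by
    unfold cgt
    rw [Finset.filter_erase]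
    split
    · rename_i hty
      rw [Finset.card_erase_of_mem (Finset.mem_filter.2 ⟨hmem, hty⟩)]
    · rename_i hty
      rw [Finset.erase_eq_of_notMem (fun hc => hty (Finset.mem_filter.1 hc).2)]
      simp
  have hHt := hH t
  rw [hins] at hHt
  rw [hers]
  by_cases ht1 : t ≤ x
  · have hty : t < y := by omega
    simp only [if_pos ht1] at hHt
    simp only [if_pos hty]
    omega
  · by_cases ht2 : y ≤ t
    · have hty : ¬ t < y := by omega
      simp only [if_neg ht1] at hHt
      simp only [if_neg hty]
      omega
    · -- x < t < y
      have hxt : x < t := by omega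
      have hty : t < y := by omega
      have hkey : cgt A x ≤ cgt A t := by
        apply Finset.card_le_card
        intro u hu
        rw [Finset.mem_filter] at hu ⊢
        have := hmin u hu.1 hu.2
        exact ⟨hu.1, by omega⟩
      have hHx := hH x
      have hinsx : cge (insert x R) x = cge R x + 1 := by
        unfold cge
        rw [Finset.filter_insert, if_pos (le_refl x),
          Finset.card_insert_of_notMem (fun hc => hx (Finset.mem_of_mem_filter x hc))]
      rw [hinsx] at hHx
      have hRx : cge R t ≤ cge R x := cge_mono R (le_of_lt hxt)
      simp only [if_pos hty]
      omega

lemma runPath_hall : ∀ (As : List (Finset ℕ)) (x : ℕ) (R : Finset ℕ), x ∉ R →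
    List.IsChain pairHall (insert x R :: As) →
    List.IsChain (· < ·) (x :: (runPath x As).1) ∧
    List.IsChain pairHall (R :: (runPath x As).2) := by
  intro As
  induction As with
  | nil =>
    intro x R hx h
    rw [runPath_nil]
    exact ⟨List.isChain_singleton x, List.isChain_singleton R⟩
  | cons A rest ih =>
    intro x R hx h
    rw [List.isChain_cons_cons] at h
    obtain ⟨hmem, hlt, hmin, hR⟩ := hall_step hx h.1
    set y := nextEntry A x with hy
    have hyA : insert y (A.erase y) = A := Finset.insert_erase hmem
    have hrec := ih y (A.erase y) (Finset.notMem_erase y A)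
      (by rw [List.isChain_cons]
          constructor
          · intro b hb
            rw [hyA]
            rcases rest with - | ⟨B, rest'⟩
            · simp at hb
            · simp at hb
              rw [← hb]
              exact (List.isChain_cons_cons.1 h.2).1
          · rw [hyA] at *
            exact h.2.tail)
    rw [runPath_cons]
    constructor
    · rw [List.isChain_cons_cons]
      exact ⟨hlt, hrec.1⟩
    · rw [List.isChain_cons_cons]
      exact ⟨hR, hrec.2⟩

lemma runRow_hall : ∀ (xs : List ℕ) (As : List (Finset ℕ)), xs.Nodup →
    List.IsChain pairHall (xs.toFinset :: As) →
    (∀ p ∈ (runRow xs As).1, List.IsChain (· < ·) p) ∧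
    List.IsChain pairHall ((∅ : Finset ℕ) :: (runRow xs As).2) := by
  intro xs
  induction xs with
  | nil =>
    intro As _ h
    rw [runRow_nil]
    constructor
    · intro p hp; simp at hp
    · simpa using h
  | cons x xs ih =>
    intro As hnd h
    have hx : x ∉ xs.toFinset := by
      simp only [List.mem_toFinset]
      exact (List.nodup_cons.1 hnd).1
    have h' : List.IsChain pairHall (insert x xs.toFinset :: As) := by
      rwa [List.toFinset_cons] at h
    obtain ⟨hp1, hp2⟩ := runPath_hall As x xs.toFinset hx h'
    obtain ⟨hr1, hr2⟩ := ih (runPath x As).2 (List.nodup_cons.1 hnd).2 hp2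
    rw [runRow_cons]
    constructor
    · intro p hp
      rcases List.mem_cons.1 hp with rfl | hp
      · exact hp1
      · exact hr1 p hp
    · exact hr2

lemma runRows_hall : ∀ (fuel : ℕ) (As : List (Finset ℕ)),
    List.IsChain pairHall As →
    ∀ p ∈ runRows fuel As, List.IsChain (· < ·) p := by
  intro fuel
  induction fuel with
  | zero => intro As _ p hp; simp [runRows] at hp
  | succ f ih =>
    intro As h p hp
    rcases As with - | ⟨A, rest⟩
    · simp [runRows] at hp
    · rw [runRows_succ] at hp
      have hA : (A.sort (· ≤ ·)).toFinset = A := Finset.sort_toFinset _ _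
      have hnd : (A.sort (· ≤ ·)).Nodup := Finset.sort_nodup _ _
      have h1 : List.IsChain pairHall ((A.sort (· ≤ ·)).toFinset :: rest) := by
        rw [hA]; exact h
      obtain ⟨hpaths, hchain⟩ := runRow_hall _ rest hnd h1
      rcases List.mem_append.1 hp with hp | hp
      · exact hpaths p hp
      · exact ih _ hchain.tail p hp

lemma chain'_zip_tail {α : Type*} {r : α → α → Prop} :
    ∀ {p : List α}, List.IsChain r p → ∀ e ∈ p.zip p.tail, r e.1 e.2 := by
  intro p
  induction p with
  | nil => intro _ e he; simp at he
  | cons a q ih =>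
    intro h e he
    rcases q with - | ⟨b, q'⟩
    · simp at he
    · simp only [List.tail_cons, List.zip_cons_cons] at he
      rcases List.mem_cons.1 he with rfl | he
      · exact (List.isChain_cons_cons.1 h).1
      · exact ih (List.isChain_cons_cons.1 h).2 e he

lemma noWrap_of_chainHall (n : ℕ) (rows : ℕ → Finset ℕ)
    (h : List.IsChain pairHall ((List.range n).map fun i => rows (i + 1))) :
    NoWrap n rows := by
  intro i _
  rw [wrapCount, List.countP_eq_zero]
  intro e he
  rw [edgesOf] at he
  rw [List.mem_flatten] at he
  obtain ⟨l, hl, hel⟩ := he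
  rw [List.mem_map] at hl
  obtain ⟨p, hp, rfl⟩ := hl
  have := chain'_zip_tail (runRows_hall n _ h p hp) e hel
  simp only [decide_eq_true_eq, not_and]
  omega


/-! ### Structural facts about the run (no Hall hypothesis) -/

lemma nextEntry_mem {A : Finset ℕ} (h : A.Nonempty) (x : ℕ) : nextEntry A x ∈ A := by
  by_cases hf : (A.filter (fun y => x < y)).Nonempty
  · exact (nextEntry_spec hf).1
  · rw [Finset.not_nonempty_iff_eq_empty] at hf
    rw [nextEntry, hf]
    simp only [Finset.min_empty]
    rw [WithTop.untopD_top, ← Finset.coe_min' h, WithTop.untopD_coe]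
    exact Finset.min'_mem A h

lemma runPath_struct : ∀ (As : List (Finset ℕ)) (x : ℕ), (∀ A ∈ As, A.Nonempty) →
    (runPath x As).1.length = As.length ∧
    (runPath x As).2.length = As.length ∧
    ∀ j, j < As.length →
      ((runPath x As).1.getD j 0 ∈ As.getD j ∅ ∧
       (runPath x As).2.getD j ∅ = (As.getD j ∅).erase ((runPath x As).1.getD j 0)) := by
  intro As
  induction As with
  | nil => intro x _; simp [runPath_nil]
  | cons A rest ih =>
    intro x hne
    obtain ⟨ih1, ih2, ih3⟩ := ih (nextEntry A x) (fun B hB => hne B (List.mem_cons_of_mem A hB))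
    rw [runPath_cons]
    refine ⟨by simpa using ih1, by simpa using ih2, ?_⟩
    intro j hj
    cases j with
    | zero =>
      simp only [List.getD_cons_zero]
      exact ⟨nextEntry_mem (hne A (List.mem_cons_self)) x, trivial⟩
    | succ j =>
      simp only [List.getD_cons_succ]
      exact ih3 j (by simpa using hj)

lemma filter_zip_tail : ∀ (p : List ℕ) (P : ℕ → Bool) (j : ℕ), j + 1 < p.length →
    (∀ j' (h : j' < p.length), P (p[j']'h) = true ↔ j' = j) →
    (p.zip p.tail).filter (fun e => P e.1) = [(p.getD j 0, p.getD (j+1) 0)] := by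
  intro p
  induction p with
  | nil => intro P j hj; simp at hj
  | cons a q ih =>
    intro P j hj h
    rcases q with - | ⟨b, q'⟩
    · simp at hj
    · have hzip : ((a :: b :: q').zip (a :: b :: q').tail)
          = (a, b) :: ((b :: q').zip (b :: q').tail) := by
        simp
      rw [hzip]
      cases j with
      | zero =>
        have hPa : P a = true := (h 0 (by simp)).2 rfl
        rw [List.filter_cons]
        simp only [hPa, if_pos]
        have hnil : ((b :: q').zip (b :: q').tail).filter (fun e => P e.1) = [] := by
          rw [List.filter_eq_nil_iff]
          intro e he
          have he1 : e.1 ∈ (b :: q') := by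
            rcases e with ⟨e1, e2⟩
            exact (List.of_mem_zip he).1
          obtain ⟨i, hi, hie⟩ := List.mem_iff_getElem.1 he1
          have : (a :: b :: q')[i+1]'(by simpa using hi) = e.1 := by
            simpa using hie
          have hPfalse := h (i+1) (by simpa using hi)
          rw [this] at hPfalse
          intro hc
          have := hPfalse.1 hc
          omega
        rw [hnil]
        simp
      | succ j =>
        have hPa : P a = false := by
          have := h 0 (by simp)
          simp only [List.getElem_cons_zero] at this
          rcases Bool.eq_false_or_eq_true (P a) with hb | hb
          · exact absurd (this.1 hb) (by omega)
          · exact hb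
        rw [List.filter_cons]
        simp only [hPa, Bool.false_eq_true, if_neg, if_false]
        have := ih P j (by simpa using hj) (fun j' hj' => by
          have := h (j'+1) (by simpa using hj')
          simp only [List.getElem_cons_succ] at this
          rw [this]
          omega)
        rw [this]
        simp

lemma mem_zip_tail {α : Type*} : ∀ {p : List α} {e : α × α}, e ∈ p.zip p.tail →
    ∃ j, ∃ h : j + 1 < p.length, e.1 = p[j]'(by omega) ∧ e.2 = p[j+1]'h := by
  intro p
  induction p with
  | nil => intro e he; simp at he
  | cons a q ih =>
    intro e he
    rcases q with - | ⟨b, q'⟩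
    · simp at he
    · simp only [List.tail_cons, List.zip_cons_cons] at he
      rcases List.mem_cons.1 he with rfl | he
      · exact ⟨0, by simp, rfl, rfl⟩
      · obtain ⟨j, hj, h1, h2⟩ := ih (by simpa using he)
        exact ⟨j + 1, by simpa using hj, by simpa using h1, by simpa using h2⟩

lemma flatten_filter_eq (ps : List (List ℕ)) (P : ℕ → Bool) (j : ℕ)
    (h : ∀ p ∈ ps, ((p.zip p.tail).filter (fun e => P e.1)) = [(p.getD j 0, p.getD (j+1) 0)]) :
    ((ps.map (fun p => p.zip p.tail)).flatten.filter (fun e => P e.1))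
      = ps.map (fun p => (p.getD j 0, p.getD (j+1) 0)) := by
  induction ps with
  | nil => simp
  | cons p ps ih =>
    simp only [List.map_cons, List.flatten_cons, List.filter_append]
    rw [h p (List.mem_cons_self), ih (fun q hq => h q (List.mem_cons_of_mem p hq))]
    simp


lemma runRow_struct : ∀ (xs : List ℕ) (As : List (Finset ℕ)),
    (∀ A ∈ As, xs.length ≤ A.card) →
    (runRow xs As).2.length = As.length ∧
    (runRow xs As).1.length = xs.length ∧
    (∀ p ∈ (runRow xs As).1, p.length = As.length + 1) ∧
    (∀ p ∈ (runRow xs As).1, ∀ j, j < As.length → p.getD (j+1) 0 ∈ As.getD j ∅) ∧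
    ((runRow xs As).1.map (fun p => p.getD 0 0) = xs) ∧
    (∀ j, j < As.length →
      ((runRow xs As).2.getD j ∅ ⊆ As.getD j ∅) ∧
      ((As.getD j ∅).card = ((runRow xs As).2.getD j ∅).card + xs.length) ∧
      (((runRow xs As).1.map (fun p => p.getD (j+1) 0)).Nodup) ∧
      (((runRow xs As).1.map (fun p => p.getD (j+1) 0)).toFinset
        = (As.getD j ∅) \ ((runRow xs As).2.getD j ∅))) := by
  intro xs
  induction xs with
  | nil =>
    intro As h
    rw [runRow_nil]
    refine ⟨rfl, rfl, by simp, by simp, by simp, ?_⟩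
    intro j hj
    exact ⟨subset_rfl, by simp, by simp, by simp⟩
  | cons x xs ih =>
    intro As h
    have hne : ∀ A ∈ As, A.Nonempty := fun A hA =>
      Finset.card_pos.1 (lt_of_lt_of_le (by simp) (h A hA))
    obtain ⟨hp1, hp2, hp3⟩ := runPath_struct As x hne
    have hAs1card : ∀ B ∈ (runPath x As).2, xs.length ≤ B.card := by
      intro B hB
      obtain ⟨j, hj, hBj⟩ := List.mem_iff_getElem.1 hB
      have hj' : j < As.length := by omega
      have hBd : (runPath x As).2.getD j ∅ = B := by
        rw [List.getD_eq_getElem _ _ hj, hBj]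
      have hmem : As.getD j ∅ ∈ As := by
        rw [List.getD_eq_getElem _ _ hj']
        exact List.getElem_mem _
      have hcard := h _ hmem
      rw [← hBd, (hp3 j hj').2, Finset.card_erase_of_mem (hp3 j hj').1]
      simp only [List.length_cons] at hcard
      omega
    obtain ⟨ih1, ih2, ih3, ih4, ih5, ih6⟩ := ih (runPath x As).2 hAs1card
    have hlen1 : (runPath x As).2.length = As.length := hp2
    rw [runRow_cons]
    simp only [List.length_cons, List.map_cons, List.getD_cons_zero]
    refine ⟨by rw [ih1, hlen1], by rw [ih2], ?_, ?_, ?_, ?_⟩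
    · intro p hp
      rcases List.mem_cons.1 hp with rfl | hp
      · simp only [List.length_cons, hp1]
      · rw [ih3 p hp, hlen1]
    · intro p hp j hj
      rcases List.mem_cons.1 hp with rfl | hp
      · simp only [List.getD_cons_succ]
        exact (hp3 j hj).1
      · have := ih4 p hp j (by rw [hlen1]; exact hj)
        rw [(hp3 j hj).2] at this
        exact Finset.mem_of_mem_erase this
    · rw [ih5]
    · intro j hj
      have hj1 : j < (runPath x As).2.length := by rw [hlen1]; exact hj
      obtain ⟨hB1, hB2, hB3, hB4⟩ := ih6 j hj1
      have hBsub : (runRow xs (runPath x As).2).2.getD j ∅ ⊆ As.getD j ∅ := by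
        apply subset_trans hB1
        rw [(hp3 j hj).2]
        exact Finset.erase_subset _ _
      have hyA : (runPath x As).1.getD j 0 ∈ As.getD j ∅ := (hp3 j hj).1
      have hyB : (runPath x As).1.getD j 0 ∉ (runRow xs (runPath x As).2).2.getD j ∅ := by
        intro hc
        have := hB1 hc
        rw [(hp3 j hj).2] at this
        exact (Finset.notMem_erase _ _) this
      refine ⟨hBsub, ?_, ?_, ?_⟩
      · have hceq : ((runPath x As).2.getD j ∅).card + 1 = (As.getD j ∅).card := by
          rw [(hp3 j hj).2, Finset.card_erase_of_mem (hp3 j hj).1]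
          have : 1 ≤ (As.getD j ∅).card := Finset.card_pos.2 ⟨_, (hp3 j hj).1⟩
          omega
        omega
      · simp only [List.getD_cons_succ]
        rw [List.nodup_cons]
        constructor
        · intro hc
          have : (runPath x As).1.getD j 0
              ∈ ((runRow xs (runPath x As).2).1.map (fun p => p.getD (j+1) 0)).toFinset := by
            rw [List.mem_toFinset]; exact hc
          rw [hB4] at this
          rw [(hp3 j hj).2] at this
          exact (Finset.notMem_erase _ _) (Finset.mem_sdiff.1 this).1
        · exact hB3
      · simp only [List.getD_cons_succ, List.toFinset_cons]
        rw [hB4, (hp3 j hj).2]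
        ext v
        simp only [Finset.mem_insert, Finset.mem_sdiff, Finset.mem_erase]
        constructor
        · rintro (rfl | ⟨⟨hv0, hv1⟩, hv2⟩)
          · exact ⟨hyA, hyB⟩
          · exact ⟨hv1, hv2⟩
        · rintro ⟨hv1, hv2⟩
          by_cases hvy : v = (runPath x As).1.getD j 0
          · exact Or.inl hvy
          · exact Or.inr ⟨⟨hvy, hv1⟩, hv2⟩


/-- All edges of a list of paths. -/
def bedges (L : List (List ℕ)) : List (ℕ × ℕ) := (L.map fun p => p.zip p.tail).flatten

/-- Edges whose source lies in `rows i`. -/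
def bnd (rows : ℕ → Finset ℕ) (i : ℕ) (E : List (ℕ × ℕ)) : List (ℕ × ℕ) :=
  E.filter (fun e => decide (e.1 ∈ rows i))

lemma edgesOf_eq_bedges (n : ℕ) (rows : ℕ → Finset ℕ) :
    edgesOf n rows = bedges (pathsOf n rows) := rfl

lemma runRows_struct (rows : ℕ → Finset ℕ)
    (hdisj : ∀ a b, a ≠ b → Disjoint (rows a) (rows b)) :
    ∀ (k : ℕ) (As : List (Finset ℕ)) (r : ℕ), As.length = k →
    (∀ j, j < k → As.getD j ∅ ⊆ rows (r + j)) →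
    (∀ j j', j ≤ j' → j' < k → (As.getD j ∅).card ≤ (As.getD j' ∅).card) →
    (∀ e ∈ bedges (runRows k As),
        ∃ j, j + 1 < k ∧ e.1 ∈ As.getD j ∅ ∧ e.2 ∈ As.getD (j+1) ∅) ∧
    (∀ j, j + 1 < k →
      ((bnd rows (r+j) (bedges (runRows k As))).map Prod.fst).Nodup ∧
      ((bnd rows (r+j) (bedges (runRows k As))).map Prod.fst).toFinset = As.getD j ∅ ∧
      ((bnd rows (r+j) (bedges (runRows k As))).map Prod.snd).Nodup ∧
      ((bnd rows (r+j) (bedges (runRows k As))).map Prod.snd).toFinset ⊆ As.getD (j+1) ∅) := by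
  intro k
  induction k with
  | zero =>
    intro As r h1 h2 h3
    constructor
    · intro e he; simp [bedges, runRows] at he
    · intro j hj; omega
  | succ k ih =>
    intro As r hlen hsub hmono
    rcases As with - | ⟨A, rest⟩
    · simp at hlen
    · have hrl : rest.length = k := by simpa using hlen
      set xs := A.sort (· ≤ ·) with hxs
      have hxslen : xs.length = A.card := Finset.length_sort _
      have hcards : ∀ B ∈ rest, xs.length ≤ B.card := by
        intro B hB
        obtain ⟨j, hj, hBj⟩ := List.mem_iff_getElem.1 hB
        have := hmono 0 (j+1) (by omega) (by omega)
        simp only [List.getD_cons_zero, List.getD_cons_succ] at this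
        rw [List.getD_eq_getElem _ _ hj, hBj] at this
        omega
      obtain ⟨rs1, rs2, rs3, rs4, rs5, rs6⟩ := runRow_struct xs rest hcards
      set ps := (runRow xs rest).1 with hps
      set Bs := (runRow xs rest).2 with hBs
      have hBl : Bs.length = k := by rw [rs1, hrl]
      have hrec := ih Bs (r+1) hBl
        (fun j hj => by
          have h1 : Bs.getD j ∅ ⊆ rest.getD j ∅ := (rs6 j (by omega)).1
          have h2 : rest.getD j ∅ ⊆ rows (r + (j+1)) := by
            have := hsub (j+1) (by omega)
            simpa using this
          have harr : r + 1 + j = r + (j + 1) := by omega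
          rw [harr]
          exact subset_trans h1 h2)
        (fun j j' hjj hj' => by
          have c1 := (rs6 j (by omega)).2.1
          have c2 := (rs6 j' (by omega)).2.1
          have := hmono (j+1) (j'+1) (by omega) (by omega)
          simp only [List.getD_cons_succ] at this
          omega)
      have hE : bedges (runRows (k+1) (A :: rest)) = bedges ps ++ bedges (runRows k Bs) := by
        rw [runRows_succ, bedges, List.map_append, List.flatten_append]
        rfl
      have hpathmem : ∀ p ∈ ps, ∀ j', (hj' : j' < p.length) →
          p[j']'hj' ∈ (A :: rest).getD j' ∅ := by
        intro p hp j' hj'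
        have hplen : p.length = rest.length + 1 := rs3 p hp
        cases j' with
        | zero =>
          have h0 : p.getD 0 0 ∈ xs := by
            rw [← rs5]; exact List.mem_map_of_mem hp
          rw [List.getD_eq_getElem _ _ hj'] at h0
          simp only [List.getD_cons_zero]
          rw [← Finset.mem_sort (α := ℕ) (· ≤ ·)]
          exact h0
        | succ j'' =>
          have := rs4 p hp j'' (by omega)
          rw [List.getD_eq_getElem _ _ hj'] at this
          simpa using this
      have hEb : ∀ e ∈ bedges ps,
          ∃ j, j + 1 < k + 1 ∧ e.1 ∈ (A :: rest).getD j ∅ ∧ e.2 ∈ (A :: rest).getD (j+1) ∅ := by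
        intro e he
        rw [bedges, List.mem_flatten] at he
        obtain ⟨l, hl, hel⟩ := he
        rw [List.mem_map] at hl
        obtain ⟨p, hp, rfl⟩ := hl
        obtain ⟨j, hj, h1, h2⟩ := mem_zip_tail hel
        have hplen : p.length = rest.length + 1 := rs3 p hp
        refine ⟨j, by omega, ?_, ?_⟩
        · rw [h1]; exact hpathmem p hp j _
        · rw [h2]; exact hpathmem p hp (j+1) _
      constructor
      · intro e he
        rw [hE, List.mem_append] at he
        rcases he with he | he
        · exact hEb e he
        · obtain ⟨j, hj, h1, h2⟩ := hrec.1 e he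
          refine ⟨j+1, by omega, ?_, ?_⟩
          · simp only [List.getD_cons_succ]
            exact ((rs6 j (by omega)).1) h1
          · simp only [List.getD_cons_succ]
            exact ((rs6 (j+1) (by omega)).1) h2
      · intro j hj
        have hfzt : ∀ p ∈ ps, (p.zip p.tail).filter (fun e => decide (e.1 ∈ rows (r+j)))
            = [(p.getD j 0, p.getD (j+1) 0)] := by
          intro p hp
          apply filter_zip_tail p (fun v => decide (v ∈ rows (r+j))) j (by rw [rs3 p hp]; omega)
          intro j' hj'
          have hm := hpathmem p hp j' hj'
          have hplen : p.length = rest.length + 1 := rs3 p hp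
          have hvm : p[j']'hj' ∈ rows (r + j') := hsub j' (by omega) hm
          simp only [decide_eq_true_eq]
          constructor
          · intro hvr
            by_contra hc
            have hne : r + j ≠ r + j' := by omega
            exact (Finset.disjoint_left.1 (hdisj _ _ hne)) hvr hvm
          · rintro rfl
            exact hvm
        have hEbf : bnd rows (r+j) (bedges ps)
            = ps.map (fun p => (p.getD j 0, p.getD (j+1) 0)) := by
          rw [bnd, bedges]
          exact flatten_filter_eq ps (fun v => decide (v ∈ rows (r+j))) j hfzt
        have hxsnd : xs.Nodup := Finset.sort_nodup _ _
        cases j with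
        | zero =>
          have hrecnil : bnd rows (r+0) (bedges (runRows k Bs)) = [] := by
            rw [bnd, List.filter_eq_nil_iff]
            intro e he
            obtain ⟨j', hj', h1, h2⟩ := hrec.1 e he
            have hmem : e.1 ∈ rows (r + (j'+1)) := by
              have hs : Bs.getD j' ∅ ⊆ rest.getD j' ∅ := (rs6 j' (by omega)).1
              have h2' : rest.getD j' ∅ ⊆ rows (r + (j'+1)) := by
                have := hsub (j'+1) (by omega); simpa using this
              exact h2' (hs h1)
            simp only [decide_eq_true_eq]
            intro hc
            have hne : r + 0 ≠ r + (j'+1) := by omega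
            exact (Finset.disjoint_left.1 (hdisj _ _ hne)) hc hmem
          rw [hE, bnd, List.filter_append, ← bnd, ← bnd, hEbf, hrecnil, List.append_nil]
          have hk0 : 0 < k := by omega
          have hmapfst : (ps.map (fun p => (p.getD 0 0, p.getD 1 0))).map Prod.fst = xs := by
            rw [List.map_map]
            simpa [Function.comp_def] using rs5
          have hmapsnd : (ps.map (fun p => (p.getD 0 0, p.getD 1 0))).map Prod.snd
              = ps.map (fun p => p.getD 1 0) := by
            rw [List.map_map]; rfl
          refine ⟨?_, ?_, ?_, ?_⟩
          · rw [hmapfst]; exact hxsnd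
          · rw [hmapfst]
            simp only [List.getD_cons_zero]
            exact Finset.sort_toFinset _ _
          · rw [hmapsnd]
            exact (rs6 0 (by omega)).2.2.1
          · rw [hmapsnd]
            simp only [List.getD_cons_succ]
            rw [(rs6 0 (by omega)).2.2.2]
            exact Finset.sdiff_subset
        | succ j'' =>
          have hjk : j'' + 1 < k := by omega
          obtain ⟨rf1, rf2, rf3, rf4⟩ := hrec.2 j'' hjk
          have harr : r + 1 + j'' = r + (j'' + 1) := by omega
          rw [harr] at rf1 rf2 rf3 rf4
          rw [hE, bnd, List.filter_append, ← bnd, ← bnd, hEbf]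
          have hj''r : j'' < rest.length := by omega
          have hj''r1 : j'' + 1 < rest.length := by omega
          obtain ⟨c1a, c1b, c1c, c1d⟩ := rs6 j'' hj''r
          obtain ⟨c2a, c2b, c2c, c2d⟩ := rs6 (j''+1) hj''r1
          have hmapfst : (ps.map (fun p => (p.getD (j''+1) 0, p.getD (j''+2) 0))).map Prod.fst
              = ps.map (fun p => p.getD (j''+1) 0) := by rw [List.map_map]; rfl
          have hmapsnd : (ps.map (fun p => (p.getD (j''+1) 0, p.getD (j''+2) 0))).map Prod.snd
              = ps.map (fun p => p.getD (j''+2) 0) := by rw [List.map_map]; rfl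
          rw [List.map_append, List.map_append, hmapfst, hmapsnd]
          have hdisjfst : List.Disjoint (ps.map (fun p => p.getD (j''+1) 0))
              ((bnd rows (r+(j''+1)) (bedges (runRows k Bs))).map Prod.fst) := by
            intro v hv1 hv2
            have h1 : v ∈ rest.getD j'' ∅ \ Bs.getD j'' ∅ := by
              rw [← c1d, List.mem_toFinset]; exact hv1
            have h2 : v ∈ Bs.getD j'' ∅ := by
              rw [← rf2, List.mem_toFinset]; exact hv2
            exact (Finset.mem_sdiff.1 h1).2 h2
          have hdisjsnd : List.Disjoint (ps.map (fun p => p.getD (j''+2) 0))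
              ((bnd rows (r+(j''+1)) (bedges (runRows k Bs))).map Prod.snd) := by
            intro v hv1 hv2
            have h1 : v ∈ rest.getD (j''+1) ∅ \ Bs.getD (j''+1) ∅ := by
              rw [← c2d, List.mem_toFinset]; exact hv1
            have h2 : v ∈ Bs.getD (j''+1) ∅ := by
              apply rf4
              rw [List.mem_toFinset]; exact hv2
            exact (Finset.mem_sdiff.1 h1).2 h2
          refine ⟨List.Nodup.append c1c rf1 hdisjfst, ?_, List.Nodup.append c2c rf3 hdisjsnd, ?_⟩
          · rw [List.toFinset_append, c1d, rf2]
            simp only [List.getD_cons_succ]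
            exact Finset.sdiff_union_of_subset c1a
          · rw [List.toFinset_append]
            simp only [List.getD_cons_succ]
            apply Finset.union_subset
            · rw [c2d]; exact Finset.sdiff_subset
            · exact subset_trans rf4 c2a


lemma S_mono (m : ℕ → ℕ) {i i' : ℕ} (h : i ≤ i') : S m i ≤ S m i' :=
  Finset.sum_le_sum_of_subset (Finset.Icc_subset_Icc_right h)

lemma initAs_getD (n : ℕ) (rows : ℕ → Finset ℕ) {j : ℕ} (hj : j < n) :
    ((List.range n).map fun i => rows (i + 1)).getD j ∅ = rows (j + 1) := by
  rw [List.getD_eq_getElem _ _ (by simpa using hj)]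
  simp

lemma part2 (n : ℕ) (m : ℕ → ℕ) (hn : 1 ≤ n) (rows : ℕ → Finset ℕ)
    (hpl : IsPlacement n m rows) :
    NoWrap n rows ↔ ∀ i ∈ Finset.Icc 1 (n - 1), ∀ k < S m i,
      entry rows i (S m i - k) < entry rows (i + 1) (S m (i + 1) - k) := by
  obtain ⟨hcard, hout, hdisj, hun⟩ := hpl
  have hcard' : ∀ i, 1 ≤ i → i ≤ n → (rows i).card = S m i := by
    intro i h1 h2
    exact hcard i (Finset.mem_Icc.2 ⟨h1, h2⟩)
  constructor
  · -- NoWrap → inequalities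
    intro hnw i hi k hk
    rw [Finset.mem_Icc] at hi
    have hi1 : 1 ≤ i := hi.1
    have hin : i < n := by omega
    obtain ⟨hstr1, hstr2⟩ := runRows_struct rows hdisj n
      ((List.range n).map fun i => rows (i + 1)) 1 (by simp)
      (fun j hj => by
        rw [initAs_getD n rows hj]
        have : 1 + j = j + 1 := by omega
        rw [this])
      (fun j j' hjj hj' => by
        rw [initAs_getD n rows (by omega), initAs_getD n rows hj']
        rw [hcard' (j+1) (by omega) (by omega), hcard' (j'+1) (by omega) (by omega)]
        exact S_mono m (by omega))
    have hEdef : bedges (runRows n ((List.range n).map fun i => rows (i + 1)))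
        = edgesOf n rows := rfl
    have hbnd := hstr2 (i - 1) (by omega)
    have h1i : 1 + (i - 1) = i := by omega
    rw [h1i, hEdef] at hbnd
    rw [initAs_getD n rows (by omega), initAs_getD n rows (by omega)] at hbnd
    have hii : i - 1 + 1 = i := by omega
    rw [hii] at hbnd
    obtain ⟨hsnd, hsft, htnd, htft⟩ := hbnd
    -- existence of targets
    have hex : ∀ x, x ∈ rows i → ∃ y, (x, y) ∈ bnd rows i (edgesOf n rows) := by
      intro x hx
      have : x ∈ ((bnd rows i (edgesOf n rows)).map Prod.fst).toFinset := by
        rw [hsft]; exact hx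
      rw [List.mem_toFinset, List.mem_map] at this
      obtain ⟨e, he, he1⟩ := this
      exact ⟨e.2, by rw [← he1]; exact he⟩
    choose! f hf using hex
    -- facts about f
    have hfE : ∀ x ∈ rows i, (x, f x) ∈ edgesOf n rows := by
      intro x hx
      exact List.mem_of_mem_filter (hf x hx)
    have hfmem : ∀ x ∈ rows i, f x ∈ rows (i + 1) := by
      intro x hx
      obtain ⟨j', hj', h1, h2⟩ := hstr1 (x, f x) (by rw [hEdef]; exact hfE x hx)
      rw [initAs_getD n rows (by omega)] at h1
      rw [initAs_getD n rows (by omega)] at h2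
      simp only at h1 h2
      have hji : j' + 1 = i := by
        by_contra hc
        exact (Finset.disjoint_left.1 (hdisj (j'+1) i hc)) h1 hx
      rw [← hji]
      exact h2
    have hflt : ∀ x ∈ rows i, x < f x := by
      intro x hx
      have hwc := hnw i (Finset.mem_Icc.2 ⟨hi.1, hi.2⟩)
      rw [wrapCount, List.countP_eq_zero] at hwc
      have := hwc (x, f x) (hfE x hx)
      simp only [decide_eq_true_eq, not_and] at this
      have hne : f x ≠ x := by
        intro hc
        have := hfmem x hx
        rw [hc] at this
        exact (Finset.disjoint_left.1 (hdisj i (i+1) (by omega))) hx this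
      by_contra hcon
      push_neg at hcon
      have hlt : f x < x := by omega
      exact (this hlt) hx
    have hfinj : Set.InjOn f (rows i) := by
      intro x hx x' hx' hxy
      have h1 := hf x hx
      have h2 := hf x' hx'
      rw [hxy] at h1
      have := List.inj_on_of_nodup_map htnd h1 h2 rfl
      exact congrArg Prod.fst this
    have := ineq_of_inj (rows i) (rows (i+1)) f hfinj hfmem hflt
      (by rw [hcard' i (by omega) (by omega), hcard' (i+1) (by omega) (by omega)]
          exact S_mono m (by omega))
      (k := k) (by rw [hcard' i (by omega) (by omega)]; exact hk)
    rw [hcard' i (by omega) (by omega), hcard' (i+1) (by omega) (by omega)] at this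
    exact this
  · -- inequalities → NoWrap
    intro hineq
    apply noWrap_of_chainHall
    rw [List.isChain_iff_getElem]
    intro j hj
    simp only [List.length_map, List.length_range] at hj
    have hg1 : ((List.range n).map fun i => rows (i + 1))[j]'(by simp; omega)
        = rows (j + 1) := by simp
    have hg2 : ((List.range n).map fun i => rows (i + 1))[j + 1]'(by simp; omega)
        = rows (j + 2) := by simp
    rw [hg1, hg2]
    have hcA : (rows (j+1)).card = S m (j+1) := hcard' (j+1) (by omega) (by omega)
    have hcB : (rows (j+2)).card = S m (j+2) := hcard' (j+2) (by omega) (by omega)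
    rw [pairHall_iff _ _ (by rw [hcA, hcB]; exact S_mono m (by omega))]
    intro k hk
    rw [hcA] at hk ⊢
    rw [hcB]
    have := hineq (j+1) (Finset.mem_Icc.2 ⟨by omega, by omega⟩) k hk
    have hj2 : j + 1 + 1 = j + 2 := by omega
    rw [hj2] at this
    exact this


/-! ### Shape and yMap lemmas -/

lemma shape_length (n : ℕ) (m : ℕ → ℕ) : (shapeOf n m).length = n := by
  simp [shapeOf]

lemma shape_getD (n : ℕ) (m : ℕ → ℕ) {i : ℕ} (h : i < n) :
    (shapeOf n m).getD i 0 = S m (n - i) := by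
  rw [shapeOf, List.getD_eq_getElem _ _ (by simpa using h)]
  simp

lemma shape_sum (n : ℕ) (m : ℕ → ℕ) : (shapeOf n m).sum = Ntot n m := by
  induction n with
  | zero => simp [shapeOf, Ntot]
  | succ n ih =>
    rw [shapeOf, Ntot]
    have h1 : ((List.range (n+1)).map fun i => S m (n + 1 - i)).sum
        = S m (n+1) + ((List.range n).map fun i => S m (n - i)).sum := by
      rw [List.sum_range_succ' (fun i => S m (n + 1 - i)) n]
      congr 1
      exact congrArg List.sum (List.map_congr_left (fun a ha => by
        rw [List.mem_range] at ha; congr 1; omega))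
    rw [h1]
    rw [Finset.sum_Icc_succ_top (by omega : 1 ≤ n + 1)]
    rw [← shapeOf, ih, Ntot]
    omega

lemma rows_sub {n : ℕ} {m : ℕ → ℕ} {rows : ℕ → Finset ℕ} (hpl : IsPlacement n m rows)
    {i : ℕ} (h1 : 1 ≤ i) (h2 : i ≤ n) : rows i ⊆ Finset.Icc 1 (Ntot n m) := by
  rw [← hpl.2.2.2]
  exact Finset.subset_biUnion_of_mem rows (Finset.mem_Icc.2 ⟨h1, h2⟩)

lemma ent_image (A : Finset ℕ) :
    (Finset.range A.card).image (fun j => ent A (A.card - j)) = A := by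
  apply Finset.eq_of_subset_of_card_le
  · intro v hv
    rw [Finset.mem_image] at hv
    obtain ⟨j, hj, rfl⟩ := hv
    rw [Finset.mem_range] at hj
    exact ent_mem A _ (by omega) (by omega)
  · rw [Finset.card_image_of_injOn, Finset.card_range]
    intro a ha b hb hab
    have hab' : ent A (A.card - a) = ent A (A.card - b) := hab
    simp only [Finset.coe_range, Set.mem_Iio] at ha hb
    by_contra hne
    rcases Nat.lt_or_ge a b with h | h
    · have := ent_lt_ent A (k := A.card - b) (l := A.card - a) (by omega) (by omega) (by omega)
      omega
    · have hba : b < a := by omega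
      have := ent_lt_ent A (k := A.card - a) (l := A.card - b) (by omega) (by omega) (by omega)
      omega

/-- chained inequality between non-adjacent rows -/
lemma ent_chain {n : ℕ} {m : ℕ → ℕ} {rows : ℕ → Finset ℕ}
    (hIneq : ∀ i ∈ Finset.Icc 1 (n - 1), ∀ k < S m i,
      entry rows i (S m i - k) < entry rows (i + 1) (S m (i + 1) - k)) :
    ∀ a b j, 1 ≤ a → a < b → b ≤ n → j < S m a →
      entry rows a (S m a - j) < entry rows b (S m b - j) := by
  intro a b j ha hab hbn hj
  have hab' : a + 1 ≤ b := hab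
  induction b, hab' using Nat.le_induction with
  | base =>
    exact hIneq a (Finset.mem_Icc.2 ⟨ha, by omega⟩) j hj
  | succ b hb ih =>
    have h1 : entry rows a (S m a - j) < entry rows b (S m b - j) := ih (by omega) (by omega)
    have h2 : entry rows b (S m b - j) < entry rows (b+1) (S m (b+1) - j) := by
      apply hIneq b (Finset.mem_Icc.2 ⟨by omega, by omega⟩) j
      exact lt_of_lt_of_le hj (S_mono m (by omega))
    omega

lemma yMap_isSYT {n : ℕ} {m : ℕ → ℕ} (hn : 1 ≤ n) {rows : ℕ → Finset ℕ}
    (hpl : IsPlacement n m rows)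
    (hIneq : ∀ i ∈ Finset.Icc 1 (n - 1), ∀ k < S m i,
      entry rows i (S m i - k) < entry rows (i + 1) (S m (i + 1) - k)) :
    IsSYT (shapeOf n m) (yMap n m rows) := by
  have hcard : ∀ i, 1 ≤ i → i ≤ n → (rows i).card = S m i := by
    intro i h1 h2
    exact hpl.1 i (Finset.mem_Icc.2 ⟨h1, h2⟩)
  set N := Ntot n m with hN
  have hentmem : ∀ i j, 1 ≤ i → i ≤ n → j < S m i →
      entry rows i (S m i - j) ∈ rows i := by
    intro i j h1 h2 hj
    rw [← hcard i h1 h2] at hj ⊢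
    exact ent_mem _ _ (by omega) (by omega)
  have hentbd : ∀ i j, 1 ≤ i → i ≤ n → j < S m i →
      1 ≤ entry rows i (S m i - j) ∧ entry rows i (S m i - j) ≤ N := by
    intro i j h1 h2 hj
    have := rows_sub hpl h1 h2 (hentmem i j h1 h2 hj)
    rw [Finset.mem_Icc] at this
    exact this
  have hstrict : ∀ i j j', 1 ≤ i → i ≤ n → j < j' → j' < S m i →
      entry rows i (S m i - j') < entry rows i (S m i - j) := by
    intro i j j' h1 h2 hjj hj'
    have hc := hcard i h1 h2
    exact ent_lt_ent (rows i) (k := S m i - j') (l := S m i - j)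
      (by omega) (by omega) (by omega)
  have hshape : ∀ c : ℕ × ℕ, (c.1 < (shapeOf n m).length ∧ c.2 < (shapeOf n m).getD c.1 0)
      ↔ (c.1 < n ∧ c.2 < S m (n - c.1)) := by
    intro c
    rw [shape_length]
    constructor
    · rintro ⟨h1, h2⟩
      rw [shape_getD n m h1] at h2
      exact ⟨h1, h2⟩
    · rintro ⟨h1, h2⟩
      rw [shape_getD n m h1]
      exact ⟨h1, h2⟩
  have hval : ∀ c : ℕ × ℕ, c.1 < n → c.2 < S m (n - c.1) →
      yMap n m rows c = N - entry rows (n - c.1) (S m (n - c.1) - c.2) + 1 := by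
    intro c h1 h2
    rw [yMap, if_pos ⟨h1, h2⟩]
  refine ⟨?_, ?_, ?_, ?_, ?_⟩
  · intro c hc
    rw [yMap, if_neg]
    intro hcon
    exact hc ((hshape c).2 hcon)
  · intro c h1 h2
    obtain ⟨hc1, hc2⟩ := (hshape c).1 ⟨h1, h2⟩
    rw [hval c hc1 hc2, shape_sum]
    have := hentbd (n - c.1) c.2 (by omega) (by omega) hc2
    omega
  · intro c c' h1 h2 h1' h2' hne
    obtain ⟨hc1, hc2⟩ := (hshape c).1 ⟨h1, h2⟩
    obtain ⟨hc1', hc2'⟩ := (hshape c').1 ⟨h1', h2'⟩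
    rw [hval c hc1 hc2, hval c' hc1' hc2']
    have hb := hentbd (n - c.1) c.2 (by omega) (by omega) hc2
    have hb' := hentbd (n - c'.1) c'.2 (by omega) (by omega) hc2'
    intro hcon
    have hent_eq : entry rows (n - c.1) (S m (n - c.1) - c.2)
        = entry rows (n - c'.1) (S m (n - c'.1) - c'.2) := by omega
    by_cases hcc : c.1 = c'.1
    · have hc2ne : c.2 ≠ c'.2 := by
        intro h
        exact hne (Prod.ext hcc h)
      rw [hcc] at hent_eq
      rcases Nat.lt_or_ge c.2 c'.2 with h | h
      · have := hstrict (n - c'.1) c.2 c'.2 (by omega) (by omega) h hc2'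
        omega
      · have := hstrict (n - c'.1) c'.2 c.2 (by omega) (by omega) (by omega)
          (by rw [hcc] at hc2; exact hc2)
        omega
    · have hrne : n - c.1 ≠ n - c'.1 := by omega
      have := Finset.disjoint_left.1 (hpl.2.2.1 _ _ hrne)
        (hentmem (n - c.1) c.2 (by omega) (by omega) hc2)
      rw [hent_eq] at this
      exact this (hentmem (n - c'.1) c'.2 (by omega) (by omega) hc2')
  · intro i j j' h1 hjj hj'
    rw [shape_length] at h1
    rw [shape_getD n m h1] at hj'
    have hv1 := hval (i, j) h1 (by show j < S m (n - i); omega)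
    have hv2 := hval (i, j') h1 (by show j' < S m (n - i); omega)
    simp only at hv1 hv2
    rw [hv1, hv2]
    have hb1 := hentbd (n - i) j (by omega) (by omega) (by omega)
    have hb2 := hentbd (n - i) j' (by omega) (by omega) hj'
    have := hstrict (n - i) j j' (by omega) (by omega) hjj hj'
    omega
  · intro i i' j hii h1' hj hj'
    rw [shape_length] at h1'
    rw [shape_getD n m (by omega)] at hj
    rw [shape_getD n m h1'] at hj'
    have hv1 := hval (i, j) (by show i < n; omega) (by show j < S m (n - i); omega)
    have hv2 := hval (i', j) (by show i' < n; omega) (by show j < S m (n - i'); omega)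
    simp only at hv1 hv2
    rw [hv1, hv2]
    have hb1 := hentbd (n - i) j (by omega) (by omega) (by omega)
    have hb2 := hentbd (n - i') j (by omega) (by omega) (by omega)
    have := ent_chain hIneq (n - i') (n - i) j (by omega) (by omega) (by omega) hj'
    omega


lemma rows_eq_image {n : ℕ} {m : ℕ → ℕ} {rows : ℕ → Finset ℕ} (hpl : IsPlacement n m rows)
    {i : ℕ} (h1 : 1 ≤ i) (h2 : i ≤ n) :
    rows i = (Finset.range (S m i)).image
      (fun j => Ntot n m + 1 - yMap n m rows (n - i, j)) := by
  have hcard := hpl.1 i (Finset.mem_Icc.2 ⟨h1, h2⟩)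
  have hni : n - (n - i) = i := by omega
  have himg := ent_image (rows i)
  rw [hcard] at himg
  conv_lhs => rw [← himg]
  apply Finset.image_congr
  intro j hj
  simp only [Finset.mem_coe, Finset.mem_range] at hj
  have hcond : ((n - i : ℕ), j).1 < n ∧ ((n - i : ℕ), j).2 < S m (n - ((n - i : ℕ), j).1) := by
    constructor
    · show n - i < n; omega
    · show j < S m (n - (n - i)); rw [hni]; exact hj
  simp only [yMap]
  rw [if_pos hcond]
  simp only [hni]
  have hmem : ent (rows i) (S m i - j) ∈ rows i := by
    rw [← hcard] at hj ⊢
    exact ent_mem _ _ (by omega) (by omega)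
  have hbd := rows_sub hpl h1 h2 hmem
  rw [Finset.mem_Icc] at hbd
  show ent (rows i) (S m i - j) = Ntot n m + 1 - (Ntot n m - entry rows i (S m i - j) + 1)
  have : entry rows i (S m i - j) = ent (rows i) (S m i - j) := rfl
  rw [this]
  omega

lemma yMap_injOn (n : ℕ) (m : ℕ → ℕ) :
    Set.InjOn (yMap n m) {rows | IsPlacement n m rows ∧ NoWrap n rows} := by
  intro r1 h1 r2 h2 heq
  funext i
  by_cases hi : 1 ≤ i ∧ i ≤ n
  · rw [rows_eq_image h1.1 hi.1 hi.2, rows_eq_image h2.1 hi.1 hi.2, heq]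
  · rw [h1.1.2.1 i (by rw [Finset.mem_Icc]; omega), h2.1.2.1 i (by rw [Finset.mem_Icc]; omega)]

lemma syt_to_placement {n : ℕ} {m : ℕ → ℕ} (hn : 1 ≤ n) {T : ℕ × ℕ → ℕ}
    (hT : IsSYT (shapeOf n m) T) :
    ∃ rows : ℕ → Finset ℕ, (IsPlacement n m rows ∧ NoWrap n rows) ∧ yMap n m rows = T := by
  classical
  obtain ⟨hT0, hTb, hTd, hTrow, hTcol⟩ := hT
  set N := Ntot n m with hN
  have hlen : (shapeOf n m).length = n := shape_length n m
  have hcell : ∀ i j, 1 ≤ i → i ≤ n → j < S m i →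
      ((n - i : ℕ) < (shapeOf n m).length ∧ j < (shapeOf n m).getD (n - i) 0) := by
    intro i j h1 h2 hj
    rw [hlen, shape_getD n m (by omega)]
    have : n - (n - i) = i := by omega
    rw [this]
    exact ⟨by omega, hj⟩
  have hTbd : ∀ i j, 1 ≤ i → i ≤ n → j < S m i → 1 ≤ T (n - i, j) ∧ T (n - i, j) ≤ N := by
    intro i j h1 h2 hj
    have hc := hcell i j h1 h2 hj
    have := hTb ((n - i : ℕ), j) hc.1 hc.2
    rw [shape_sum] at this
    exact this
  set R : ℕ → Finset ℕ := fun i =>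
    if 1 ≤ i ∧ i ≤ n then (Finset.range (S m i)).image (fun j => N + 1 - T (n - i, j)) else ∅
    with hR
  have hRval : ∀ i, 1 ≤ i → i ≤ n →
      R i = (Finset.range (S m i)).image (fun j => N + 1 - T (n - i, j)) := by
    intro i h1 h2
    rw [hR]
    simp only [if_pos (And.intro h1 h2)]
  have hinj : ∀ i, 1 ≤ i → i ≤ n → Set.InjOn (fun j => N + 1 - T (n - i, j))
      (Finset.range (S m i)) := by
    intro i h1 h2 a ha b hb hab
    simp only [Finset.coe_range, Set.mem_Iio] at ha hb
    by_contra hne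
    have hca := hcell i a h1 h2 ha
    have hcb := hcell i b h1 h2 hb
    have hTne := hTd ((n - i : ℕ), a) ((n - i : ℕ), b) hca.1 hca.2 hcb.1 hcb.2
      (by intro hc; exact hne (congrArg Prod.snd hc))
    have hba := hTbd i a h1 h2 ha
    have hbb := hTbd i b h1 h2 hb
    have hab' : N + 1 - T (n - i, a) = N + 1 - T (n - i, b) := hab
    apply hTne
    omega
  have hRcard : ∀ i, 1 ≤ i → i ≤ n → (R i).card = S m i := by
    intro i h1 h2
    rw [hRval i h1 h2, Finset.card_image_of_injOn (hinj i h1 h2), Finset.card_range]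
  have hRsub : ∀ i, 1 ≤ i → i ≤ n → R i ⊆ Finset.Icc 1 N := by
    intro i h1 h2 v hv
    rw [hRval i h1 h2, Finset.mem_image] at hv
    obtain ⟨j, hj, rfl⟩ := hv
    rw [Finset.mem_range] at hj
    have := hTbd i j h1 h2 hj
    rw [Finset.mem_Icc]
    omega
  have hRdisj : ∀ a b, a ≠ b → Disjoint (R a) (R b) := by
    intro a b hab
    rw [Finset.disjoint_left]
    intro v hva hvb
    by_cases ha : 1 ≤ a ∧ a ≤ n
    · by_cases hb : 1 ≤ b ∧ b ≤ n
      · rw [hRval a ha.1 ha.2, Finset.mem_image] at hva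
        rw [hRval b hb.1 hb.2, Finset.mem_image] at hvb
        obtain ⟨j, hj, hj2⟩ := hva
        obtain ⟨j', hj', hj2'⟩ := hvb
        rw [Finset.mem_range] at hj hj'
        have hca := hcell a j ha.1 ha.2 hj
        have hcb := hcell b j' hb.1 hb.2 hj'
        have hba := hTbd a j ha.1 ha.2 hj
        have hbb := hTbd b j' hb.1 hb.2 hj'
        have hTne := hTd ((n - a : ℕ), j) ((n - b : ℕ), j') hca.1 hca.2 hcb.1 hcb.2
          (by intro hc
              have := congrArg Prod.fst hc
              simp only at this
              omega)
        apply hTne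
        omega
      · rw [hR] at hvb; simp only [if_neg hb] at hvb; exact absurd hvb (Finset.notMem_empty v)
    · rw [hR] at hva; simp only [if_neg ha] at hva; exact absurd hva (Finset.notMem_empty v)
  have hplR : IsPlacement n m R := by
    refine ⟨?_, ?_, hRdisj, ?_⟩
    · intro i hi
      rw [Finset.mem_Icc] at hi
      exact hRcard i hi.1 hi.2
    · intro i hi
      rw [Finset.mem_Icc] at hi
      rw [hR]
      simp only [if_neg (by omega : ¬(1 ≤ i ∧ i ≤ n))]
    · have hsub : (Finset.Icc 1 n).biUnion R ⊆ Finset.Icc 1 N := by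
        intro v hv
        rw [Finset.mem_biUnion] at hv
        obtain ⟨i, hi, hvi⟩ := hv
        rw [Finset.mem_Icc] at hi
        exact hRsub i hi.1 hi.2 hvi
      apply Finset.eq_of_subset_of_card_le hsub
      rw [Finset.card_biUnion (fun a _ b _ hab => hRdisj a b hab)]
      have : ∀ i ∈ Finset.Icc 1 n, (R i).card = S m i := by
        intro i hi
        rw [Finset.mem_Icc] at hi
        exact hRcard i hi.1 hi.2
      rw [Finset.sum_congr rfl this]
      rw [Nat.card_Icc]
      have hNe : N = (Finset.Icc 1 n).sum (S m) := rfl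
      rw [hNe]
      omega
  -- sorted structure of the rows
  have hent : ∀ i j, 1 ≤ i → i ≤ n → j < S m i →
      entry R i (S m i - j) = N + 1 - T (n - i, j) := by
    intro i j h1 h2 hj
    set L : List ℕ := (List.range (S m i)).reverse.map (fun j => N + 1 - T (n - i, j)) with hL
    have hLlen : L.length = S m i := by simp [hL]
    have hLget : ∀ a, (ha : a < S m i) → L[a]'(by omega) = N + 1 - T (n - i, S m i - 1 - a) := by
      intro a ha
      simp only [hL, List.getElem_map, List.getElem_reverse, List.length_reverse,
        List.getElem_range, List.length_range]
    have hLsorted : L.Pairwise (· < ·) := by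
      rw [List.pairwise_iff_getElem]
      intro a b ha hb hab
      rw [hLlen] at ha hb
      rw [hLget a (by omega), hLget b (by omega)]
      have hprow := hTrow (n - i) (S m i - 1 - b) (S m i - 1 - a)
        (by omega) (by omega)
        (by rw [shape_getD n m (by omega)]
            have : n - (n - i) = i := by omega
            rw [this]; omega)
      have hbd1 := hTbd i (S m i - 1 - a) h1 h2 (by omega)
      have hbd2 := hTbd i (S m i - 1 - b) h1 h2 (by omega)
      omega
    have hLnodup : L.Nodup := hLsorted.nodup
    have hLfin : L.toFinset = R i := by
      rw [hRval i h1 h2]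
      ext v
      rw [List.mem_toFinset, hL, List.mem_map, Finset.mem_image]
      constructor
      · rintro ⟨a, ha, rfl⟩
        rw [List.mem_reverse, List.mem_range] at ha
        exact ⟨a, Finset.mem_range.2 ha, rfl⟩
      · rintro ⟨a, ha, rfl⟩
        rw [Finset.mem_range] at ha
        exact ⟨a, by rw [List.mem_reverse, List.mem_range]; exact ha, rfl⟩
    have hsort : (R i).sort (· ≤ ·) = L := by
      rw [← hLfin]
      exact (List.toFinset_sort (· ≤ ·) hLnodup).2 (hLsorted.imp (fun h => le_of_lt h))
    rw [entry_eq_ent, hsort]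
    have hidx : S m i - j - 1 < L.length := by omega
    rw [List.getD_eq_getElem _ _ hidx, hLget _ (by omega)]
    have harg : S m i - 1 - (S m i - j - 1) = j := by omega
    rw [harg]
  have hIneqR : ∀ i ∈ Finset.Icc 1 (n - 1), ∀ k < S m i,
      entry R i (S m i - k) < entry R (i + 1) (S m (i + 1) - k) := by
    intro i hi k hk
    rw [Finset.mem_Icc] at hi
    have h1 : 1 ≤ i := hi.1
    have h2 : i < n := by omega
    have hkS : k < S m (i + 1) := lt_of_lt_of_le hk (S_mono m (by omega))
    rw [hent i k h1 (by omega) hk, hent (i+1) k (by omega) (by omega) hkS]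
    have hcol := hTcol (n - (i+1)) (n - i) k (by omega) (by omega)
      (by rw [shape_getD n m (by omega)]
          have : n - (n - (i+1)) = i + 1 := by omega
          rw [this]; exact hkS)
      (by rw [shape_getD n m (by omega)]
          have : n - (n - i) = i := by omega
          rw [this]; exact hk)
    have hbd1 := hTbd i k h1 (by omega) hk
    have hbd2 := hTbd (i+1) k (by omega) (by omega) hkS
    have hni : (n - (i + 1) : ℕ) = n - i - 1 := by omega
    rw [hni] at hcol hbd2 ⊢
    omega
  have hnwR : NoWrap n R := (part2 n m hn R hplR).2 hIneqR
  refine ⟨R, ⟨hplR, hnwR⟩, ?_⟩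
  funext c
  obtain ⟨c1, c2⟩ := c
  by_cases hc : c1 < n ∧ c2 < S m (n - c1)
  · have hcond : ((c1, c2) : ℕ × ℕ).1 < n ∧ ((c1, c2) : ℕ × ℕ).2 < S m (n - ((c1, c2) : ℕ × ℕ).1) := hc
    rw [yMap, if_pos hcond]
    simp only
    have h1 : 1 ≤ n - c1 := by omega
    have h2 : n - c1 ≤ n := by omega
    have hnc : n - (n - c1) = c1 := by omega
    have := hent (n - c1) c2 h1 h2 hc.2
    rw [hnc] at this
    rw [this]
    have hbd : 1 ≤ T (c1, c2) ∧ T (c1, c2) ≤ N := by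
      have := hTbd (n - c1) c2 h1 h2 hc.2
      rw [hnc] at this
      exact this
    omega
  · rw [yMap, if_neg hc]
    symm
    apply hT0
    intro hcon
    rw [hlen] at hcon
    obtain ⟨ha, hb⟩ := hcon
    simp only at ha hb
    rw [shape_getD n m ha] at hb
    exact hc ⟨ha, hb⟩

theorem nowrap_syt (n : ℕ) (m : ℕ → ℕ) (hn : 1 ≤ n) :
    Set.ncard {rows : ℕ → Finset ℕ | IsPlacement n m rows ∧ NoWrap n rows}
      = sytCount (shapeOf n m) ∧
    (∀ rows : ℕ → Finset ℕ, IsPlacement n m rows →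
      (NoWrap n rows ↔ ∀ i ∈ Finset.Icc 1 (n - 1), ∀ k < S m i,
        entry rows i (S m i - k) < entry rows (i + 1) (S m (i + 1) - k))) ∧
    Set.BijOn (yMap n m)
      {rows : ℕ → Finset ℕ | IsPlacement n m rows ∧ NoWrap n rows}
      {T : ℕ × ℕ → ℕ | IsSYT (shapeOf n m) T} := by
  have hbij : Set.BijOn (yMap n m)
      {rows : ℕ → Finset ℕ | IsPlacement n m rows ∧ NoWrap n rows}
      {T : ℕ × ℕ → ℕ | IsSYT (shapeOf n m) T} := by
    refine ⟨?_, yMap_injOn n m, ?_⟩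
    · intro rows hrows
      exact yMap_isSYT hn hrows.1 ((part2 n m hn rows hrows.1).1 hrows.2)
    · intro T hT
      obtain ⟨rows, hrows, hy⟩ := syt_to_placement hn hT
      exact ⟨rows, hrows, hy⟩
  refine ⟨?_, ?_, hbij⟩
  · rw [sytCount, ← hbij.image_eq]
    exact (Set.ncard_image_of_injOn hbij.injOn).symm
  · intro rows hpl
    exact part2 n m hn rows hpl

end CMLQ
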